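/- Let Ω ⊆ ℝⁿ be open, p > 1, u : Ω → ℝ nonnegative and twice differentiable, and v : Ω → ℝ twice differentiable with v > 0 and −Δv > 0 on Ω. Define R₁(u,v) = |Δu|^p − Δ(u^p/v^{p−1}) |Δv|^{p−2} Δv. Then R₁(u,v) ≥ 0 pointwise on Ω (where u > 0). -/

import Mathlib

/-!
With `s = u / v`, the second directional derivatives of `w = u^p / v^(p-1)` satisfy the Picone
identity `∂ₑ²w = p s^(p-1) ∂ₑ²u - (p-1) s^p ∂ₑ²v + p (p-1) s^(p-2) / v · (∂ₑu - s ∂ₑv)²`,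
so summing over the coordinate directions gives `Δw ≥ p s^(p-1) Δu - (p-1) s^p Δv`.
Multiplying by `|Δv|^(p-1)` (this is where `-Δv > 0` enters) and applying Young's inequality
`p a b^(p-1) ≤ a^p + (p-1) b^p` with `a = |Δu|`, `b = s |Δv|` yields `R₁(u, v) ≥ 0`.
-/

/-- The Laplacian of `f` at `x` as the sum of second partial derivatives. -/
noncomputable def elap {n : ℕ} (f : EuclideanSpace ℝ (Fin n) → ℝ)
    (x : EuclideanSpace ℝ (Fin n)) : ℝ :=
  ∑ i, fderiv ℝ (fun y => fderiv ℝ f y (EuclideanSpace.single i 1)) x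
    (EuclideanSpace.single i 1)

theorem Real.mul_mul_rpow_sub_one_le {a b p : ℝ} (ha : 0 ≤ a) (hb : 0 ≤ b) (hp : 1 < p) :
    p * a * b ^ (p - 1) ≤ a ^ p + (p - 1) * b ^ p := by
  have hp₀ : 0 < p - 1 := by linarith
  have hyoung := Real.young_inequality_of_nonneg ha (Real.rpow_nonneg hb (p - 1))
    (Real.HolderConjugate.conjExponent hp)
  have hpow : (b ^ (p - 1)) ^ p.conjExponent = b ^ p := by
    rw [← Real.rpow_mul hb, Real.conjExponent]
    congr 1
    field_simp
  rw [hpow, Real.conjExponent] at hyoung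
  have : a * b ^ (p - 1) ≤ (a ^ p + (p - 1) * b ^ p) / p := by
    convert hyoung using 1
    field_simp
  rwa [le_div_iff₀ (by linarith), mul_comm, ← mul_assoc] at this

theorem HasFDerivAt.div {𝕜 E : Type*} [NontriviallyNormedField 𝕜] [NormedAddCommGroup E]
    [NormedSpace 𝕜 E] {f g : E → 𝕜} {f' g' : E →L[𝕜] 𝕜} {x : E}
    (hf : HasFDerivAt f f' x) (hg : HasFDerivAt g g' x) (hx : g x ≠ 0) :
    HasFDerivAt (fun y => f y / g y) ((g x)⁻¹ • (f' - (f x / g x) • g')) x := by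
  have h := hf.fun_mul ((hasDerivAt_inv hx).comp_hasFDerivAt x hg)
  simp only [Function.comp_def, ← div_eq_mul_inv] at h
  refine h.congr_fderiv ?_
  ext e
  simp
  field_simp
  ring

section Picone

variable {E : Type*} [NormedAddCommGroup E] [NormedSpace ℝ E] {u v : E → ℝ} {x : E}

theorem hasFDerivAt_rpow_div_rpow {u' v' : E →L[ℝ] ℝ} (hu : HasFDerivAt u u' x)
    (hv : HasFDerivAt v v' x) (hux : 0 < u x) (hvx : 0 < v x) (p : ℝ) :
    HasFDerivAt (fun y => u y ^ p / v y ^ (p - 1))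
      ((p * (u x / v x) ^ (p - 1)) • u' - ((p - 1) * (u x / v x) ^ p) • v') x := by
  have hq := (hu.div hv hvx.ne').rpow_const (p := p) (Or.inl (div_pos hux hvx).ne')
  have hpos : ∀ᶠ y in nhds x, 0 < u y ∧ 0 < v y :=
    (continuousAt_const.eventually_lt hu.continuousAt hux).and
      (continuousAt_const.eventually_lt hv.continuousAt hvx)
  -- near `x`, `u ^ p / v ^ (p - 1) = (u / v) ^ p * v`
  refine (hq.fun_mul hv).congr_of_eventuallyEq ?_ |>.congr_fderiv ?_
  · filter_upwards [hpos] with y ⟨huy, hvy⟩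
    rw [Real.div_rpow huy.le hvy.le, Real.rpow_sub_one hvy.ne']
    field_simp
  · have hqp : (u x / v x) ^ p = (u x / v x) ^ (p - 1) * (u x / v x) := by
      rw [Real.rpow_sub_one (div_pos hux hvx).ne']
      field_simp
    ext e
    simp only [add_apply, sub_apply, smul_apply, smul_eq_mul]
    rw [hqp]
    field_simp
    ring

theorem ContDiffAt.hasFDerivAt_fderiv_apply (hu : ContDiffAt ℝ 2 u x) (e : E) :
    HasFDerivAt (fun y => fderiv ℝ u y e) (fderiv ℝ (fun y => fderiv ℝ u y e) x) x :=
  (((hu.fderiv_right (m := 1) le_rfl).differentiableAt one_ne_zero).clm_apply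
    (differentiableAt_const e)).hasFDerivAt

theorem fderiv_fderiv_rpow_div_rpow_apply (hu : ContDiffAt ℝ 2 u x) (hv : ContDiffAt ℝ 2 v x)
    (hux : 0 < u x) (hvx : 0 < v x) (p : ℝ) (e : E) :
    fderiv ℝ (fun y => fderiv ℝ (fun z => u z ^ p / v z ^ (p - 1)) y e) x e =
      p * (u x / v x) ^ (p - 1) * fderiv ℝ (fun y => fderiv ℝ u y e) x e
        - (p - 1) * (u x / v x) ^ p * fderiv ℝ (fun y => fderiv ℝ v y e) x e
        + p * (p - 1) * (u x / v x) ^ (p - 2) / v x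
          * (fderiv ℝ u x e - u x / v x * fderiv ℝ v x e) ^ 2 := by
  have hfirst : (fun y => fderiv ℝ (fun z => u z ^ p / v z ^ (p - 1)) y e) =ᶠ[nhds x]
      fun y => p * (u y / v y) ^ (p - 1) * fderiv ℝ u y e
        - (p - 1) * (u y / v y) ^ p * fderiv ℝ v y e := by
    filter_upwards [hu.eventually (by simp), hv.eventually (by simp),
      continuousAt_const.eventually_lt hu.continuousAt hux,
      continuousAt_const.eventually_lt hv.continuousAt hvx] with y huy hvy huy₀ hvy₀
    rw [(hasFDerivAt_rpow_div_rpow (huy.differentiableAt two_ne_zero).hasFDerivAt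
      (hvy.differentiableAt two_ne_zero).hasFDerivAt huy₀ hvy₀ p).fderiv]
    simp only [sub_apply, smul_apply, smul_eq_mul, mul_assoc]
  have hs : 0 < u x / v x := div_pos hux hvx
  have hq := (hu.differentiableAt two_ne_zero).hasFDerivAt.div
    (hv.differentiableAt two_ne_zero).hasFDerivAt hvx.ne'
  have hsecond := (((hq.rpow_const (p := p - 1) (Or.inl hs.ne')).const_mul p).fun_mul
    (hu.hasFDerivAt_fderiv_apply e)).fun_sub
    (((hq.rpow_const (p := p) (Or.inl hs.ne')).const_mul (p - 1)).fun_mul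
    (hv.hasFDerivAt_fderiv_apply e))
  rw [hfirst.fderiv_eq, hsecond.fderiv]
  have hpow₁ : (u x / v x) ^ (p - 1) = (u x / v x) ^ (p - 2) * (u x / v x) := by
    rw [show p - 1 = p - 2 + 1 by ring, Real.rpow_add_one hs.ne']
  have hpow₂ : (u x / v x) ^ p = (u x / v x) ^ (p - 2) * (u x / v x) ^ 2 := by
    rw [← Real.rpow_natCast, ← Real.rpow_add hs]
    norm_num
  simp only [sub_apply, add_apply, smul_apply, smul_eq_mul, show p - 1 - 1 = p - 2 by ring]
  rw [hpow₁, hpow₂]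
  field_simp
  ring

end Picone

theorem le_elap_rpow_div_rpow {n : ℕ} {u v : EuclideanSpace ℝ (Fin n) → ℝ}
    {x : EuclideanSpace ℝ (Fin n)} (hu : ContDiffAt ℝ 2 u x) (hv : ContDiffAt ℝ 2 v x)
    (hux : 0 < u x) (hvx : 0 < v x) {p : ℝ} (hp : 1 ≤ p) :
    p * (u x / v x) ^ (p - 1) * elap u x - (p - 1) * (u x / v x) ^ p * elap v x ≤
      elap (fun y => u y ^ p / v y ^ (p - 1)) x := by
  simp only [elap, Finset.mul_sum, ← Finset.sum_sub_distrib]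
  gcongr with i
  rw [fderiv_fderiv_rpow_div_rpow_apply hu hv hux hvx]
  refine le_add_of_nonneg_right (mul_nonneg (div_nonneg ?_ hvx.le) (sq_nonneg _))
  have := div_pos hux hvx
  have : 0 ≤ p - 1 := by linarith
  positivity

theorem picone_remainder_nonneg_of_le {p s L M W : ℝ} (hp : 1 < p) (hs : 0 ≤ s) (hM : M < 0)
    (hW : p * s ^ (p - 1) * L - (p - 1) * s ^ p * M ≤ W) :
    0 ≤ |L| ^ p - W * |M| ^ (p - 2) * M := by
  obtain ⟨m, hm, rfl⟩ : ∃ m, 0 < m ∧ M = -m := ⟨-M, neg_pos.mpr hM, (neg_neg M).symm⟩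
  have hm₁ : m ^ (p - 2) * m = m ^ (p - 1) := by
    rw [← Real.rpow_add_one hm.ne']; ring_nf
  have hm₂ : m ^ (p - 1) * m = m ^ p := by
    rw [← Real.rpow_add_one hm.ne']; ring_nf
  have hyoung := Real.mul_mul_rpow_sub_one_le (abs_nonneg L) (mul_nonneg hs hm.le) hp
  rw [Real.mul_rpow hs hm.le, Real.mul_rpow hs hm.le] at hyoung
  have hL := mul_le_mul_of_nonneg_left (neg_abs_le L)
    (by positivity : 0 ≤ p * s ^ (p - 1) * m ^ (p - 1))
  have hWm := mul_le_mul_of_nonneg_right hW (Real.rpow_nonneg hm.le (p - 1))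
  have hexpand : (p * s ^ (p - 1) * L - (p - 1) * s ^ p * -m) * m ^ (p - 1) =
      p * s ^ (p - 1) * m ^ (p - 1) * L + (p - 1) * (s ^ p * m ^ p) := by
    rw [← hm₂]; ring
  rw [abs_neg, abs_of_pos hm,
    show |L| ^ p - W * m ^ (p - 2) * -m = |L| ^ p + W * m ^ (p - 1) by rw [← hm₁]; ring]
  linarith

theorem second_order_picone_nonneg_general {n : ℕ} (Ω : Set (EuclideanSpace ℝ (Fin n)))
    (hΩ : IsOpen Ω) (p : ℝ) (hp : 1 < p)
    (u v : EuclideanSpace ℝ (Fin n) → ℝ)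
    (hu : ContDiffOn ℝ 2 u Ω)
    (hv : ContDiffOn ℝ 2 v Ω) (hv0 : ∀ x ∈ Ω, 0 < v x)
    (hvlap : ∀ x ∈ Ω, 0 < -elap v x)
    (x : EuclideanSpace ℝ (Fin n)) (hx : x ∈ Ω) (hux : 0 < u x) :
    0 ≤ |elap u x| ^ p
        - elap (fun y => u y ^ p / v y ^ (p - 1)) x * |elap v x| ^ (p - 2) * elap v x :=
  picone_remainder_nonneg_of_le hp (div_pos hux (hv0 x hx)).le
    (neg_pos.mp (hvlap x hx))
    (le_elap_rpow_div_rpow (hu.contDiffAt (hΩ.mem_nhds hx)) (hv.contDiffAt (hΩ.mem_nhds hx))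
      hux (hv0 x hx) hp.le)

/-- Second-order Picone inequality: with `v > 0`, `−Δv > 0`,
`R₁(u,v) = |Δu|^p − Δ(u^p/v^{p−1}) |Δv|^{p−2} Δv ≥ 0` pointwise where `u > 0`. -/
theorem second_order_picone_nonneg {n : ℕ} (Ω : Set (EuclideanSpace ℝ (Fin n)))
    (hΩ : IsOpen Ω) (p : ℝ) (hp : 1 < p)
    (u v : EuclideanSpace ℝ (Fin n) → ℝ)
    (hu : ContDiffOn ℝ 2 u Ω) (hu0 : ∀ x ∈ Ω, 0 ≤ u x)
    (hv : ContDiffOn ℝ 2 v Ω) (hv0 : ∀ x ∈ Ω, 0 < v x)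
    (hvlap : ∀ x ∈ Ω, 0 < -elap v x)
    (x : EuclideanSpace ℝ (Fin n)) (hx : x ∈ Ω) (hux : 0 < u x) :
    0 ≤ |elap u x| ^ p
        - elap (fun y => u y ^ p / v y ^ (p - 1)) x * |elap v x| ^ (p - 2) * elap v x :=
  second_order_picone_nonneg_general Ω hΩ p hp u v hu hv hv0 hvlap x hx hux
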